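/- arXiv:2307.03540 — 2 statements merged into one kernel-verified Lean document; each statement's English description precedes it below -/
import Mathlib

section
/- In a dual weak brace S, a normal subsemigroup I of (S,+) is an ideal of S if and only if a · x ∈ I and x · a ∈ I for all a ∈ S and x ∈ I, where a · b := -a + a ∘ b - b. -/
/-!
In any weak brace `λ_a` is an endomorphism of `(S, +)`, `a ∘ b = a + λ_a(b)` and
`λ_{a⁻}(a) = -a⁻`; when `(S, ∘)` is Clifford its idempotents are central, which gives moreover
`λ_a(b) = a · b + b` and `x ∘ a = a ∘ (a⁻ ∘ x ∘ a)`. So for a normal subsemigroup `I` of `(S, +)`,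
closure under `a · -` is closure under `λ_a`, which yields closure under `∘` and under `⁻`
(as `x⁻ = -λ_{x⁻}(x)`), and the identities
`x · a = -x + (a + λ_a(a⁻ ∘ x ∘ a) - a)` and `a⁻ ∘ x ∘ a = a⁻ + (λ_{a⁻}(x) + λ_{a⁻}(x · a)) - a⁻`
trade closure under `- · a` for normality in `(S, ∘)`.
-/

/-- A weak brace: `(S,+)` and `(S,∘)` are inverse semigroups satisfying
`a ∘ (b + c) = a ∘ b - a + a ∘ c` and `a ∘ a⁻ = -a + a`. -/
class WeakBrace (S : Type*) where
  add : S → S → S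
  mul : S → S → S
  neg : S → S
  inv : S → S
  add_assoc : ∀ a b c : S, add (add a b) c = add a (add b c)
  mul_assoc : ∀ a b c : S, mul (mul a b) c = mul a (mul b c)
  add_reg : ∀ a : S, add (add a (neg a)) a = a
  neg_reg : ∀ a : S, add (add (neg a) a) (neg a) = neg a
  neg_unique : ∀ a x : S, add (add a x) a = a → add (add x a) x = x → x = neg a
  mul_reg : ∀ a : S, mul (mul a (inv a)) a = a
  inv_reg : ∀ a : S, mul (mul (inv a) a) (inv a) = inv a
  inv_unique : ∀ a x : S, mul (mul a x) a = a → mul (mul x a) x = x → x = inv a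
  distrib : ∀ a b c : S, mul a (add b c) = add (add (mul a b) (neg a)) (mul a c)
  link : ∀ a : S, mul a (inv a) = add (neg a) a

/-- A dual weak brace: a weak brace whose multiplicative semigroup is Clifford. -/
class DualWeakBrace (S : Type*) extends WeakBrace S where
  clifford : ∀ a : S, WeakBrace.mul a (WeakBrace.inv a) = WeakBrace.mul (WeakBrace.inv a) a

namespace WeakBrace

variable {S : Type*} [WeakBrace S]

/-- `λ_a(b) = -a + a ∘ b`. -/
def lam (a b : S) : S := add (neg a) (mul a b)

/-- `ρ_b(a) = (-a + a ∘ b)⁻ ∘ a ∘ b`. -/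
def rho (b a : S) : S := mul (mul (inv (lam a b)) a) b

/-- `a · b = -a + a ∘ b - b`. -/
def cdot (a b : S) : S := add (add (neg a) (mul a b)) (neg b)

/-- `a⁰ = a - a`. -/
def sq (a : S) : S := add a (neg a)

/-- Additive idempotent (the sets of idempotents of `+` and `∘` coincide). -/
def IsIdem (e : S) : Prop := add e e = e

/-- `[a,b]₊ = -a - b + a + b`. -/
def brkt (a b : S) : S := add (add (add (neg a) (neg b)) a) b

/-- `I` is a full inverse subsemigroup of `(S,+)`. -/
def IsFullAddSub (I : Set S) : Prop :=
  (∀ e : S, IsIdem e → e ∈ I) ∧ (∀ x ∈ I, ∀ y ∈ I, add x y ∈ I) ∧ (∀ x ∈ I, neg x ∈ I)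

/-- `I` is a normal subsemigroup of `(S,+)`. -/
def IsNormalAdd (I : Set S) : Prop :=
  IsFullAddSub I ∧ ∀ a : S, ∀ x ∈ I, add (add (neg a) x) a ∈ I

/-- `I` is a normal subsemigroup of `(S,∘)`. -/
def IsNormalMul (I : Set S) : Prop :=
  (∀ e : S, IsIdem e → e ∈ I) ∧ (∀ x ∈ I, ∀ y ∈ I, mul x y ∈ I) ∧ (∀ x ∈ I, inv x ∈ I) ∧
    ∀ a : S, ∀ x ∈ I, mul (mul (inv a) x) a ∈ I

/-- `I` is a left ideal of the weak brace `S`. -/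
def IsLeftIdeal (I : Set S) : Prop :=
  IsFullAddSub I ∧ ∀ a : S, ∀ x ∈ I, lam a x ∈ I

/-- `I` is an ideal of the weak brace `S`. -/
def IsIdeal (I : Set S) : Prop :=
  IsNormalAdd I ∧ (∀ a : S, ∀ x ∈ I, lam a x ∈ I) ∧ IsNormalMul I

/-- The socle `Soc(S)`. -/
def Soc (S : Type*) [WeakBrace S] : Set S :=
  {a | ∀ b : S, add a b = mul a b ∧ add a b = add b a}

/-- The annihilator `Ann(S)`. -/
def Ann (S : Type*) [WeakBrace S] : Set S :=
  {a | ∀ b : S, add a b = add b a ∧ add a b = mul a b ∧ mul a b = mul b a}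

/-- The congruence `a ∼_I b ⟺ a⁰ = b⁰ and -a + b ∈ I` associated to an ideal `I`. -/
def simI (I : Set S) (a b : S) : Prop := sq a = sq b ∧ add (neg a) b ∈ I

/-- Membership in the inverse subsemigroup of `(S,+)` generated by a set `X`. -/
inductive genAdd (X : Set S) : S → Prop
  | base : ∀ x ∈ X, genAdd X x
  | add : ∀ a b : S, genAdd X a → genAdd X b → genAdd X (add a b)
  | neg : ∀ a : S, genAdd X a → genAdd X (neg a)

/-- `X · Y`: the additive inverse subsemigroup generated by the elements `x · y`. -/
def cdotSet (X Y : Set S) : Set S :=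
  {s | genAdd {z | ∃ x ∈ X, ∃ y ∈ Y, z = cdot x y} s}

/-- `S^(n)` for `n ≥ 1`: `S^(1) = S`, `S^(n+1) = S^(n) · S`. -/
def Spow (S : Type*) [WeakBrace S] : ℕ → Set S
  | 0 => Set.univ
  | 1 => Set.univ
  | (n+2) => cdotSet (Spow S (n+1)) Set.univ

end WeakBrace

class InverseSemigroup (T : Type*) extends Semigroup T, Inv T where
  mul_inv_mul_self : ∀ a : T, a * a⁻¹ * a = a
  inv_mul_inv_self : ∀ a : T, a⁻¹ * a * a⁻¹ = a⁻¹
  eq_inv_of_mul_mul : ∀ a x : T, a * x * a = a → x * a * x = x → x = a⁻¹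

namespace InverseSemigroup

variable {T : Type*} [InverseSemigroup T]

theorem mul_inv_mul_self' (a : T) : a * (a⁻¹ * a) = a := by
  rw [← mul_assoc, mul_inv_mul_self]

theorem inv_inv (a : T) : a⁻¹⁻¹ = a :=
  (eq_inv_of_mul_mul _ _ (inv_mul_inv_self a) (mul_inv_mul_self a)).symm

theorem isIdempotentElem_mul_inv (a : T) : IsIdempotentElem (a * a⁻¹) := by
  rw [IsIdempotentElem, ← mul_assoc, mul_inv_mul_self]

theorem isIdempotentElem_inv_mul (a : T) : IsIdempotentElem (a⁻¹ * a) := by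
  rw [IsIdempotentElem, ← mul_assoc, inv_mul_inv_self]

theorem inv_eq_self {e : T} (he : IsIdempotentElem e) : e⁻¹ = e :=
  (eq_inv_of_mul_mul e e (by rw [he.eq, he.eq]) (by rw [he.eq, he.eq])).symm

/-- By uniqueness of inverses, `x := (e * f)⁻¹` equals `f * x * e`; this makes `x`, hence
`e * f = x⁻¹`, idempotent. -/
theorem isIdempotentElem_mul {e f : T} (he : IsIdempotentElem e) (hf : IsIdempotentElem f) :
    IsIdempotentElem (e * f) := by
  set x := (e * f)⁻¹
  have hx : f * x * e = x := by
    refine eq_inv_of_mul_mul _ _ ?_ ?_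
    · calc e * f * (f * x * e) * (e * f) = e * f * x * (e * f) := by
            simp only [mul_assoc, hf.mul_self_mul, he.mul_self_mul]
        _ = e * f := mul_inv_mul_self _
    · calc f * x * e * (e * f) * (f * x * e) = f * (x * (e * f) * x) * e := by
            simp only [mul_assoc, hf.mul_self_mul, he.mul_self_mul]
        _ = f * x * e := by rw [inv_mul_inv_self, mul_assoc]
  have hxx : IsIdempotentElem x := by
    calc x * x = f * (x * (e * f) * x) * e := by
          conv_lhs => rw [← hx]
          simp only [mul_assoc]
      _ = x := by rw [inv_mul_inv_self]; exact hx
  rwa [← inv_inv (e * f), inv_eq_self hxx]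

theorem commute_of_isIdempotentElem {e f : T} (he : IsIdempotentElem e)
    (hf : IsIdempotentElem f) : Commute e f := by
  have hfe : f * e = (e * f)⁻¹ := by
    refine eq_inv_of_mul_mul _ _ ?_ ?_
    · calc e * f * (f * e) * (e * f) = e * f * (e * f) := by
            simp only [mul_assoc, hf.mul_self_mul, he.mul_self_mul]
        _ = e * f := isIdempotentElem_mul he hf
    · calc f * e * (e * f) * (f * e) = f * e * (f * e) := by
            simp only [mul_assoc, hf.mul_self_mul, he.mul_self_mul]
        _ = f * e := isIdempotentElem_mul hf he
  rw [Commute, SemiconjBy, hfe, inv_eq_self (isIdempotentElem_mul he hf)]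

theorem mul_inv_rev (a b : T) : (a * b)⁻¹ = b⁻¹ * a⁻¹ := by
  refine (eq_inv_of_mul_mul _ _ ?_ ?_).symm
  · calc a * b * (b⁻¹ * a⁻¹) * (a * b) = a * ((b * b⁻¹) * (a⁻¹ * a)) * b := by
          simp only [mul_assoc]
      _ = a * (a⁻¹ * a) * (b * b⁻¹ * b) := by
          rw [(commute_of_isIdempotentElem (isIdempotentElem_mul_inv b)
            (isIdempotentElem_inv_mul a)).eq]
          simp only [mul_assoc]
      _ = a * b := by rw [mul_inv_mul_self', mul_inv_mul_self]
  · calc b⁻¹ * a⁻¹ * (a * b) * (b⁻¹ * a⁻¹) = b⁻¹ * ((a⁻¹ * a) * (b * b⁻¹)) * a⁻¹ := by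
          simp only [mul_assoc]
      _ = b⁻¹ * (b * b⁻¹) * (a⁻¹ * a * a⁻¹) := by
          rw [(commute_of_isIdempotentElem (isIdempotentElem_inv_mul a)
            (isIdempotentElem_mul_inv b)).eq]
          simp only [mul_assoc]
      _ = b⁻¹ * a⁻¹ := by rw [inv_mul_inv_self, ← mul_assoc b⁻¹ b, inv_mul_inv_self]

theorem mul_eq_of_eq_mul_inv_mul_mul {a e : T} (he : IsIdempotentElem e)
    (h : a = a * a⁻¹ * e * a) : e * a = a := by
  have hg : a * a⁻¹ = e * (a * a⁻¹) := by
    calc a * a⁻¹ = a * a⁻¹ * e * (a * a⁻¹) := by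
          nth_rewrite 1 [h]
          simp only [mul_assoc]
      _ = e * (a * a⁻¹) * (a * a⁻¹) := by
          rw [(commute_of_isIdempotentElem (isIdempotentElem_mul_inv a) he).eq]
      _ = e * (a * a⁻¹) := by rw [mul_assoc, (isIdempotentElem_mul_inv a).eq]
  calc e * a = e * (a * a⁻¹) * a := by rw [mul_assoc, mul_inv_mul_self]
    _ = a := by rw [← hg, mul_inv_mul_self]

theorem map_inv {U : Type*} [InverseSemigroup U] (f : T →ₙ* U) (a : T) : f a⁻¹ = (f a)⁻¹ :=
  eq_inv_of_mul_mul _ _ (by rw [← map_mul, ← map_mul, mul_inv_mul_self])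
    (by rw [← map_mul, ← map_mul, inv_mul_inv_self])

def IsClifford (T : Type*) [InverseSemigroup T] : Prop := ∀ a : T, a * a⁻¹ = a⁻¹ * a

theorem IsClifford.commute {e : T} (hT : IsClifford T) (he : IsIdempotentElem e) (a : T) :
    Commute a e := by
  have hconj : a * e * a⁻¹ = a⁻¹ * a * e := by
    calc a * e * a⁻¹ = a * e * (a * e)⁻¹ := by
          rw [mul_inv_rev, inv_eq_self he, ← mul_assoc, he.mul_mul_self]
      _ = (a * e)⁻¹ * (a * e) := hT _
      _ = a⁻¹ * a * e := by
          rw [mul_inv_rev, inv_eq_self he, mul_assoc, ← mul_assoc a⁻¹,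
            ← (commute_of_isIdempotentElem he (isIdempotentElem_inv_mul a)).eq, ← mul_assoc,
            he.eq]
  calc a * e = a * e * (a⁻¹ * a) := by
        rw [mul_assoc, (commute_of_isIdempotentElem he (isIdempotentElem_inv_mul a)).eq,
          ← mul_assoc, mul_inv_mul_self']
    _ = a⁻¹ * a * e * a := by rw [← mul_assoc, hconj]
    _ = e * a := by
        rw [(commute_of_isIdempotentElem (isIdempotentElem_inv_mul a) he).eq, mul_assoc, ← hT,
          mul_inv_mul_self]

end InverseSemigroup

namespace WeakBrace

variable {S : Type*}

/- The reducts `(S, +)` and `(S, ∘)` as type synonyms carrying a multiplicative inverse semigroup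
structure, so that the general lemmas above apply to both. -/
def AddReduct (S : Type*) := S

def MulReduct (S : Type*) := S

instance [WeakBrace S] : InverseSemigroup (AddReduct S) where
  mul := add (S := S)
  mul_assoc := add_assoc (S := S)
  inv := neg (S := S)
  mul_inv_mul_self := add_reg (S := S)
  inv_mul_inv_self := neg_reg (S := S)
  eq_inv_of_mul_mul := neg_unique (S := S)

instance [WeakBrace S] : InverseSemigroup (MulReduct S) where
  mul := mul (S := S)
  mul_assoc := mul_assoc (S := S)
  inv := inv (S := S)
  mul_inv_mul_self := mul_reg (S := S)
  inv_mul_inv_self := inv_reg (S := S)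
  eq_inv_of_mul_mul := inv_unique (S := S)

section WeakBrace

variable [WeakBrace S]

theorem neg_neg (a : S) : neg (neg a) = a :=
  InverseSemigroup.inv_inv (T := AddReduct S) a

theorem inv_inv (a : S) : inv (inv a) = a :=
  InverseSemigroup.inv_inv (T := MulReduct S) a

theorem neg_add_rev (a b : S) : neg (add a b) = add (neg b) (neg a) :=
  InverseSemigroup.mul_inv_rev (T := AddReduct S) a b

theorem inv_mul_rev (a b : S) : inv (mul a b) = mul (inv b) (inv a) :=
  InverseSemigroup.mul_inv_rev (T := MulReduct S) a b

theorem add_neg_add_self (a : S) : add a (add (neg a) a) = a :=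
  InverseSemigroup.mul_inv_mul_self' (T := AddReduct S) a

theorem isIdem_add_neg (a : S) : IsIdem (add a (neg a)) :=
  InverseSemigroup.isIdempotentElem_mul_inv (T := AddReduct S) a

theorem isIdem_neg_add (a : S) : IsIdem (add (neg a) a) :=
  InverseSemigroup.isIdempotentElem_inv_mul (T := AddReduct S) a

theorem neg_eq_self_of_isIdem {e : S} (he : IsIdem e) : neg e = e :=
  InverseSemigroup.inv_eq_self (T := AddReduct S) he

theorem add_comm_of_isIdem {e f : S} (he : IsIdem e) (hf : IsIdem f) : add e f = add f e :=
  (InverseSemigroup.commute_of_isIdempotentElem (T := AddReduct S) he hf).eq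

theorem mul_add_eq_add_lam (a b c : S) : mul a (add b c) = add (mul a b) (lam a c) := by
  rw [distrib, lam, add_assoc]

theorem lam_add (a b c : S) : lam a (add b c) = add (lam a b) (lam a c) := by
  rw [lam, mul_add_eq_add_lam, ← add_assoc]
  rfl

theorem lam_neg (a b : S) : lam a (neg b) = neg (lam a b) :=
  InverseSemigroup.map_inv (T := AddReduct S) (U := AddReduct S) ⟨lam (S := S) a, lam_add a⟩ b

theorem add_neg_add_mul (a b : S) : add (add a (neg a)) (mul a b) = mul a b := by
  refine InverseSemigroup.mul_eq_of_eq_mul_inv_mul_mul (T := AddReduct S) (isIdem_add_neg a) ?_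
  calc mul a b = mul a (add b (add (neg b) b)) := by rw [← add_assoc, add_reg]
    _ = add (mul a b) (add (neg (lam a b)) (lam a b)) := by
        rw [mul_add_eq_add_lam, lam_add, lam_neg]
    _ = add (add (add (mul a b) (neg (mul a b))) (add a (neg a))) (mul a b) := by
        rw [lam, neg_add_rev, neg_neg]
        simp only [add_assoc]

theorem add_lam (a b : S) : add a (lam a b) = mul a b := by
  rw [lam, ← add_assoc, add_neg_add_mul]

theorem add_neg_eq_neg_add (a : S) : add a (neg a) = add (neg a) a := by
  have h : ∀ s : S, add (add s (neg s)) (add (neg s) s) = add (neg s) s := fun s => by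
    simpa only [link] using add_neg_add_mul s (inv s)
  calc add a (neg a) = add (add (neg a) a) (add a (neg a)) := by
        simpa only [neg_neg] using (h (neg a)).symm
    _ = add (add a (neg a)) (add (neg a) a) :=
        add_comm_of_isIdem (isIdem_neg_add a) (isIdem_add_neg a)
    _ = add (neg a) a := h a

theorem isClifford_addReduct : InverseSemigroup.IsClifford (AddReduct S) :=
  fun a => add_neg_eq_neg_add (S := S) a

theorem add_comm_of_isIdem_right {e : S} (he : IsIdem e) (a : S) : add a e = add e a :=
  (isClifford_addReduct.commute he a).eq

theorem mul_add_neg_add_left (a b : S) : add (mul a b) (add (neg a) a) = mul a b := by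
  rw [add_comm_of_isIdem_right (isIdem_neg_add a), ← add_neg_eq_neg_add]
  exact add_neg_add_mul a b

theorem lam_inv_self (a : S) : lam (inv a) a = neg (inv a) := by
  have h := link (inv a)
  rw [inv_inv] at h
  rw [lam, h, ← add_neg_eq_neg_add, ← add_assoc, neg_reg]

end WeakBrace

section DualWeakBrace

variable [DualWeakBrace S]

theorem isClifford_mulReduct : InverseSemigroup.IsClifford (MulReduct S) :=
  fun a => DualWeakBrace.clifford (S := S) a

theorem mul_mul_inv_comm (a b : S) : mul b (mul a (inv a)) = mul (mul a (inv a)) b :=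
  (isClifford_mulReduct.commute
    (InverseSemigroup.isIdempotentElem_mul_inv (T := MulReduct S) a) b).eq

theorem mul_add_neg_add_right (a b : S) : add (mul a b) (add (neg b) b) = mul a b := by
  have he : add (add (neg b) b) (add (neg b) b) = add (neg b) b := isIdem_neg_add b
  have hf : add (neg (mul a b)) (mul a b) = mul (add (neg b) b) (mul a (inv a)) := by
    calc add (neg (mul a b)) (mul a b) = mul (mul a b) (inv (mul a b)) := (link _).symm
      _ = mul a (mul (mul b (inv b)) (inv a)) := by rw [inv_mul_rev]; simp only [mul_assoc]
      _ = mul (mul b (inv b)) (mul a (inv a)) := by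
          rw [← mul_assoc, mul_mul_inv_comm, mul_assoc]
      _ = mul (add (neg b) b) (mul a (inv a)) := by rw [link]
  have hfe : add (add (neg (mul a b)) (mul a b)) (add (neg b) b) =
      add (neg (mul a b)) (mul a b) := by
    have h := mul_add_neg_add_left (add (neg b) b) (mul a (inv a))
    rwa [neg_eq_self_of_isIdem he, he, ← hf] at h
  rw [← add_neg_add_self (mul a b), add_assoc, hfe]

theorem cdot_add (a b : S) : add (cdot a b) b = lam a b := by
  rw [cdot, add_assoc, add_assoc, mul_add_neg_add_right, lam]

theorem mul_eq_add_lam_conj (a x : S) : mul x a = add a (lam a (mul (mul (inv a) x) a)) := by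
  rw [add_lam, ← mul_assoc, ← mul_assoc, ← mul_mul_inv_comm, mul_assoc x, mul_reg]

theorem conj_eq_add_lam (a x : S) : mul (mul (inv a) x) a =
    add (add (inv a) (add (lam (inv a) x) (lam (inv a) (cdot x a)))) (neg (inv a)) := by
  calc mul (mul (inv a) x) a = add (inv a) (lam (inv a) (add x (add (cdot x a) a))) := by
        rw [mul_assoc, cdot_add, add_lam, add_lam]
    _ = _ := by
        rw [lam_add, lam_add, lam_inv_self]
        simp only [add_assoc]

end DualWeakBrace

section Ideal

variable {I : Set S}

theorem IsNormalAdd.add_add_neg_mem [WeakBrace S] (hI : IsNormalAdd I) (a : S) {x : S}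
    (hx : x ∈ I) : add (add a x) (neg a) ∈ I := by
  simpa only [neg_neg] using hI.2 (neg a) x hx

theorem IsIdeal.cdot_mem_left [WeakBrace S] (hI : IsIdeal I) (a : S) {x : S} (hx : x ∈ I) :
    cdot a x ∈ I :=
  hI.1.1.2.1 _ (hI.2.1 a x hx) _ (hI.1.1.2.2 x hx)

theorem IsIdeal.cdot_mem_right [DualWeakBrace S] (hI : IsIdeal I) (a : S) {x : S}
    (hx : x ∈ I) : cdot x a ∈ I := by
  obtain ⟨hN, hLam, hM⟩ := hI
  rw [cdot, add_assoc, mul_eq_add_lam_conj a x]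
  exact hN.1.2.1 _ (hN.1.2.2 x hx) _ (hN.add_add_neg_mem a (hLam a _ (hM.2.2.2 a x hx)))

theorem IsNormalAdd.isIdeal_of_cdot_mem [DualWeakBrace S] (hI : IsNormalAdd I)
    (hcdot : ∀ a : S, ∀ x ∈ I, cdot a x ∈ I ∧ cdot x a ∈ I) : IsIdeal I := by
  have ⟨⟨hIdem, hAdd, hNeg⟩, _⟩ := hI
  have hLam : ∀ a : S, ∀ x ∈ I, lam a x ∈ I := fun a x hx => by
    rw [← cdot_add]
    exact hAdd _ (hcdot a x hx).1 _ hx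
  refine ⟨hI, hLam, hIdem, fun x hx y hy => ?_, fun x hx => ?_, fun a x hx => ?_⟩
  · rw [← add_lam]
    exact hAdd _ hx _ (hLam x y hy)
  · rw [← neg_neg (inv x), ← lam_inv_self]
    exact hNeg _ (hLam _ x hx)
  · rw [conj_eq_add_lam]
    exact hI.add_add_neg_mem _ (hAdd _ (hLam _ x hx) _ (hLam _ _ (hcdot a x hx).2))

end Ideal

end WeakBrace

open WeakBrace
theorem stmt14 {S : Type*} [DualWeakBrace S] (I : Set S) (hI : IsNormalAdd I) :
    IsIdeal I ↔ ∀ a : S, ∀ x ∈ I, cdot a x ∈ I ∧ cdot x a ∈ I :=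
  ⟨fun h a _ hx => ⟨h.cdot_mem_left a hx, h.cdot_mem_right a hx⟩, hI.isIdeal_of_cdot_mem⟩
end

section
/- In a dual weak brace S, the socle Soc(S) = {a ∈ S : a + b = a ∘ b and a + b = b + a for all b ∈ S} equals the set {a ∈ S : a · b ∈ E(S) and a + b = b + a for all b ∈ S}, where a · b := -a + a ∘ b - b and E(S) is the set of idempotents. -/
/-!
Both `(S,+)` and `(S,∘)` are inverse semigroups, so their idempotents commute; they are the same
elements, and on them `∘` coincides with `+`. Since `(S,∘)` is Clifford its idempotents are central,
whence `-(a ∘ b) + a ∘ b = (-a + a) + (-b + b)`.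

If `a + b = a ∘ b` then `a · b = (-a + a) + (b - b)` is idempotent. Conversely, let `a` be
central in `(S,+)` and `E = a · b` idempotent. Using `E = -E = b - a ∘ b + a` and the formula
above one finds `E + (a + b) = a ∘ b` and `E + a ∘ b = a + b`, so
`a ∘ b = E + E + a ∘ b = E + a ∘ b = a + b`.
-/

structure IsInverseSemigroup {S : Type*} (op : S → S → S) (inv : S → S) : Prop
    extends Std.Associative op where
  op_inv_op : ∀ a, op (op a (inv a)) a = a
  inv_op_inv : ∀ a, op (op (inv a) a) (inv a) = inv a
  eq_inv : ∀ a x, op (op a x) a = a → op (op x a) x = x → x = inv a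

namespace IsInverseSemigroup

variable {S : Type*} {op : S → S → S} {inv : S → S}

local infixl:70 " ⋄ " => op

theorem inv_inv (h : IsInverseSemigroup op inv) (a : S) : inv (inv a) = a :=
  (h.eq_inv (inv a) a (h.inv_op_inv a) (h.op_inv_op a)).symm

theorem inv_eq_self_of_idem (h : IsInverseSemigroup op inv) {e : S} (he : e ⋄ e = e) :
    inv e = e :=
  (h.eq_inv e e (by rw [he, he]) (by rw [he, he])).symm

theorem idem_op_inv (h : IsInverseSemigroup op inv) (a : S) :
    a ⋄ inv a ⋄ (a ⋄ inv a) = a ⋄ inv a := by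
  rw [← h.assoc, h.op_inv_op]

theorem idem_inv_op (h : IsInverseSemigroup op inv) (a : S) :
    inv a ⋄ a ⋄ (inv a ⋄ a) = inv a ⋄ a := by
  rw [← h.assoc, h.inv_op_inv]

/-- `f ⋄ inv (e ⋄ f) ⋄ e` is an inverse of `e ⋄ f`, hence equals `inv (e ⋄ f)`, which is therefore
idempotent. -/
theorem idem_op (h : IsInverseSemigroup op inv) {e f : S} (he : e ⋄ e = e) (hf : f ⋄ f = f) :
    e ⋄ f ⋄ (e ⋄ f) = e ⋄ f := by
  have := h.toAssociative
  have hinv : f ⋄ inv (e ⋄ f) ⋄ e = inv (e ⋄ f) := by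
    apply h.eq_inv
    · calc e ⋄ f ⋄ (f ⋄ inv (e ⋄ f) ⋄ e) ⋄ (e ⋄ f) = e ⋄ (f ⋄ f) ⋄ inv (e ⋄ f) ⋄ (e ⋄ e) ⋄ f := by
            ac_rfl
        _ = e ⋄ f ⋄ inv (e ⋄ f) ⋄ (e ⋄ f) := by rw [he, hf]; ac_rfl
        _ = e ⋄ f := h.op_inv_op _
    · calc f ⋄ inv (e ⋄ f) ⋄ e ⋄ (e ⋄ f) ⋄ (f ⋄ inv (e ⋄ f) ⋄ e)
            = f ⋄ (inv (e ⋄ f) ⋄ (e ⋄ e) ⋄ (f ⋄ f) ⋄ inv (e ⋄ f)) ⋄ e := by ac_rfl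
        _ = f ⋄ (inv (e ⋄ f) ⋄ (e ⋄ f) ⋄ inv (e ⋄ f)) ⋄ e := by rw [he, hf]; ac_rfl
        _ = f ⋄ inv (e ⋄ f) ⋄ e := by rw [h.inv_op_inv]
  have hidem : inv (e ⋄ f) ⋄ inv (e ⋄ f) = inv (e ⋄ f) := by
    calc inv (e ⋄ f) ⋄ inv (e ⋄ f) = (f ⋄ inv (e ⋄ f) ⋄ e) ⋄ (f ⋄ inv (e ⋄ f) ⋄ e) := by rw [hinv]
      _ = f ⋄ (inv (e ⋄ f) ⋄ (e ⋄ f) ⋄ inv (e ⋄ f)) ⋄ e := by ac_rfl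
      _ = inv (e ⋄ f) := by rw [h.inv_op_inv, hinv]
  rw [← h.inv_inv (e ⋄ f), h.inv_eq_self_of_idem hidem, hidem]

theorem op_comm_of_idem (h : IsInverseSemigroup op inv) {e f : S} (he : e ⋄ e = e)
    (hf : f ⋄ f = f) : e ⋄ f = f ⋄ e := by
  have := h.toAssociative
  have hef := h.idem_op he hf
  have hfe := h.idem_op hf he
  have : f ⋄ e = inv (e ⋄ f) := by
    apply h.eq_inv
    · calc e ⋄ f ⋄ (f ⋄ e) ⋄ (e ⋄ f) = e ⋄ (f ⋄ f) ⋄ (e ⋄ e) ⋄ f := by ac_rfl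
        _ = e ⋄ f ⋄ (e ⋄ f) := by rw [he, hf]; ac_rfl
        _ = e ⋄ f := hef
    · calc f ⋄ e ⋄ (e ⋄ f) ⋄ (f ⋄ e) = f ⋄ (e ⋄ e) ⋄ (f ⋄ f) ⋄ e := by ac_rfl
        _ = f ⋄ e ⋄ (f ⋄ e) := by rw [he, hf]; ac_rfl
        _ = f ⋄ e := hfe
  rw [this, h.inv_eq_self_of_idem hef]

theorem inv_op (h : IsInverseSemigroup op inv) (a b : S) : inv (a ⋄ b) = inv b ⋄ inv a := by
  have := h.toAssociative
  have hcomm := h.op_comm_of_idem (h.idem_op_inv b) (h.idem_inv_op a)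
  symm
  apply h.eq_inv
  · calc a ⋄ b ⋄ (inv b ⋄ inv a) ⋄ (a ⋄ b) = a ⋄ (b ⋄ inv b ⋄ (inv a ⋄ a)) ⋄ b := by ac_rfl
      _ = (a ⋄ inv a ⋄ a) ⋄ (b ⋄ inv b ⋄ b) := by rw [hcomm]; ac_rfl
      _ = a ⋄ b := by rw [h.op_inv_op, h.op_inv_op]
  · calc inv b ⋄ inv a ⋄ (a ⋄ b) ⋄ (inv b ⋄ inv a) = inv b ⋄ (inv a ⋄ a ⋄ (b ⋄ inv b)) ⋄ inv a := by
          ac_rfl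
      _ = (inv b ⋄ b ⋄ inv b) ⋄ (inv a ⋄ a ⋄ inv a) := by rw [← hcomm]; ac_rfl
      _ = inv b ⋄ inv a := by rw [h.inv_op_inv, h.inv_op_inv]

theorem inv_comm_of_comm (h : IsInverseSemigroup op inv) {a : S} (ha : ∀ x, a ⋄ x = x ⋄ a)
    (x : S) : inv a ⋄ x = x ⋄ inv a := by
  have := congrArg inv (ha (inv x))
  rwa [h.inv_op, h.inv_op, h.inv_inv, eq_comm] at this

theorem op_eq_left_of_op_op_eq (h : IsInverseSemigroup op inv) {u v : S} (hu : u ⋄ u = u)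
    (hv : v ⋄ v = v) (huvu : u ⋄ v ⋄ u = u) : u ⋄ v = u := by
  rw [← hu, h.assoc, h.op_comm_of_idem hu hv, ← h.assoc, hu, huvu]

theorem op_comm_of_idem_of_clifford (h : IsInverseSemigroup op inv)
    (hc : ∀ a, a ⋄ inv a = inv a ⋄ a) {e : S} (he : e ⋄ e = e) (a : S) : e ⋄ a = a ⋄ e := by
  have := h.toAssociative
  have hcomm := h.op_comm_of_idem he (h.idem_inv_op a)
  have key : a ⋄ e ⋄ inv a = e ⋄ (inv a ⋄ a) := by
    have hae := hc (a ⋄ e)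
    rw [h.inv_op, h.inv_eq_self_of_idem he] at hae
    calc a ⋄ e ⋄ inv a = a ⋄ (e ⋄ e) ⋄ inv a := by rw [he]
      _ = a ⋄ e ⋄ (e ⋄ inv a) := by ac_rfl
      _ = e ⋄ (inv a ⋄ a) ⋄ e := by rw [hae]; ac_rfl
      _ = e ⋄ (inv a ⋄ a) := by rw [h.assoc, ← hcomm, ← h.assoc, he]
  calc e ⋄ a = e ⋄ (a ⋄ inv a) ⋄ a := by rw [h.assoc, h.op_inv_op]
    _ = a ⋄ e ⋄ inv a ⋄ a := by rw [hc, key]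
    _ = a ⋄ (e ⋄ (inv a ⋄ a)) := by ac_rfl
    _ = a ⋄ e := by rw [hcomm, ← h.assoc, ← h.assoc, h.op_inv_op]

end IsInverseSemigroup

namespace WeakBrace

local infixl:65 " ∔ " => WeakBrace.add
local infixl:70 " ⊚ " => WeakBrace.mul
local prefix:max "∸" => WeakBrace.neg
local postfix:max "⁻" => WeakBrace.inv

section WeakBrace

variable {S : Type*} [WeakBrace S]

instance : Std.Associative (add : S → S → S) := ⟨WeakBrace.add_assoc⟩

instance : Std.Associative (mul : S → S → S) := ⟨WeakBrace.mul_assoc⟩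

variable (S) in
theorem isInverseSemigroup_add : IsInverseSemigroup (add : S → S → S) neg :=
  ⟨inferInstance, add_reg, neg_reg, neg_unique⟩

variable (S) in
theorem isInverseSemigroup_mul : IsInverseSemigroup (mul : S → S → S) inv :=
  ⟨inferInstance, mul_reg, inv_reg, inv_unique⟩

theorem isIdem_neg_add_self (a : S) : IsIdem (∸a ∔ a) := (isInverseSemigroup_add S).idem_inv_op a

theorem isIdem_add_neg_self (a : S) : IsIdem (a ∔ ∸a) := (isInverseSemigroup_add S).idem_op_inv a

theorem IsIdem.add {e f : S} (he : IsIdem e) (hf : IsIdem f) : IsIdem (e ∔ f) :=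
  (isInverseSemigroup_add S).idem_op he hf

theorem IsIdem.neg_eq {e : S} (he : IsIdem e) : ∸e = e :=
  (isInverseSemigroup_add S).inv_eq_self_of_idem he

theorem IsIdem.mul_self {e : S} (he : IsIdem e) : e ⊚ e = e := by
  have h := mul_reg e
  rwa [link, he.neg_eq, he] at h

theorem isIdem_of_mul_self {e : S} (he : e ⊚ e = e) : IsIdem e := by
  have h := link e
  rw [(isInverseSemigroup_mul S).inv_eq_self_of_idem he, he] at h
  exact h ▸ isIdem_neg_add_self e

theorem IsIdem.mul_eq_add {e f : S} (he : IsIdem e) (hf : IsIdem f) : e ⊚ f = e ∔ f := by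
  have hA := isInverseSemigroup_add S
  have hM := isInverseSemigroup_mul S
  have hp : IsIdem (e ⊚ f) := isIdem_of_mul_self (hM.idem_op he.mul_self hf.mul_self)
  have hq : IsIdem (e ∔ f) := he.add hf
  have hfe : f ⊚ e = e ⊚ f := hM.op_comm_of_idem hf.mul_self he.mul_self
  have hpe : e ⊚ f ∔ e = e ⊚ f := by
    refine hA.op_eq_left_of_op_op_eq hp he ?_
    have h := distrib e f f
    rwa [hf, he.neg_eq, eq_comm] at h
  have hpf : e ⊚ f ∔ f = e ⊚ f := by
    refine hA.op_eq_left_of_op_op_eq hp hf ?_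
    have h := distrib f e e
    rwa [he, hf.neg_eq, hfe, eq_comm] at h
  have hpq : e ⊚ f ∔ (e ∔ f) = e ⊚ f := by rw [← WeakBrace.add_assoc, hpe, hpf]
  have he_q : e ⊚ (e ∔ f) = e ∔ e ⊚ f := by
    rw [distrib, he.mul_self, he.neg_eq, he]
  have hf_q : f ⊚ (e ∔ f) = e ⊚ f := by
    rw [distrib, hfe, hf.neg_eq, hf.mul_self, WeakBrace.add_assoc, hf, hpf]
  have hq_eq : e ∔ f = e ∔ e ⊚ f ∔ (e ∔ f) ∔ e ⊚ f := by
    have h := distrib (e ∔ f) e f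
    rwa [hq.mul_self, hq.neg_eq, ← hM.op_comm_of_idem he.mul_self hq.mul_self,
      ← hM.op_comm_of_idem hf.mul_self hq.mul_self, he_q, hf_q] at h
  calc e ⊚ f = e ∔ e ⊚ f := by rw [← hA.op_comm_of_idem hp he, hpe]
    _ = e ∔ (e ⊚ f ∔ (e ∔ f)) ∔ e ⊚ f := by rw [hpq, WeakBrace.add_assoc, hp]
    _ = e ∔ e ⊚ f ∔ (e ∔ f) ∔ e ⊚ f := by ac_rfl
    _ = e ∔ f := hq_eq.symm

theorem isIdem_cdot_of_add_eq_mul {a b : S} (h : a ∔ b = a ⊚ b) : IsIdem (cdot a b) := by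
  have : cdot a b = (∸a ∔ a) ∔ (b ∔ ∸b) := by rw [cdot, ← h]; ac_rfl
  rw [this]
  exact (isIdem_neg_add_self a).add (isIdem_add_neg_self b)

end WeakBrace

section DualWeakBrace

variable {S : Type*} [DualWeakBrace S]

theorem IsIdem.mul_comm {e : S} (he : IsIdem e) (a : S) : e ⊚ a = a ⊚ e :=
  (isInverseSemigroup_mul S).op_comm_of_idem_of_clifford DualWeakBrace.clifford he.mul_self a

theorem neg_mul_add_mul (a b : S) : ∸(a ⊚ b) ∔ a ⊚ b = (∸a ∔ a) ∔ (∸b ∔ b) :=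
  calc ∸(a ⊚ b) ∔ a ⊚ b = a ⊚ b ⊚ (a ⊚ b)⁻ := (link _).symm
    _ = a ⊚ ((∸b ∔ b) ⊚ a⁻) := by rw [(isInverseSemigroup_mul S).inv_op, ← link b]; ac_rfl
    _ = a ⊚ a⁻ ⊚ (∸b ∔ b) := by rw [(isIdem_neg_add_self b).mul_comm]; ac_rfl
    _ = (∸a ∔ a) ∔ (∸b ∔ b) := by
      rw [link, (isIdem_neg_add_self a).mul_eq_add (isIdem_neg_add_self b)]

theorem add_eq_mul_of_isIdem_cdot {a b : S} (ha : ∀ x, a ∔ x = x ∔ a) (hE : IsIdem (cdot a b)) :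
    a ∔ b = a ⊚ b := by
  have hA := isInverseSemigroup_add S
  have hna : ∀ x, ∸a ∔ x = x ∔ ∸a := hA.inv_comm_of_comm ha
  have hea (x : S) : (∸a ∔ a) ∔ x = x ∔ (∸a ∔ a) := by
    rw [WeakBrace.add_assoc, ha, ← WeakBrace.add_assoc, hna, WeakBrace.add_assoc]
  have hx := neg_mul_add_mul a b
  have hE_add : cdot a b ∔ (a ∔ b) = a ⊚ b :=
    calc cdot a b ∔ (a ∔ b) = a ∔ cdot a b ∔ b := by rw [ha (cdot a b), WeakBrace.add_assoc]
      _ = (a ∔ ∸a) ∔ a ⊚ b ∔ (∸b ∔ b) := by rw [cdot]; ac_rfl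
      _ = a ⊚ b ∔ ((∸a ∔ a) ∔ (∸b ∔ b)) := by rw [ha (∸a), hea]; ac_rfl
      _ = a ⊚ b := by rw [← hx, ← WeakBrace.add_assoc, add_reg]
  have hE_neg : cdot a b = b ∔ ∸(a ⊚ b) ∔ a := by
    rw [← hE.neg_eq, cdot, hA.inv_op, hA.inv_op, hA.inv_inv, hA.inv_inv, WeakBrace.add_assoc]
  have hE_mul : cdot a b ∔ a ⊚ b = a ∔ b :=
    calc cdot a b ∔ a ⊚ b = a ∔ (b ∔ ∸(a ⊚ b)) ∔ a ⊚ b := by rw [hE_neg, ha]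
      _ = a ∔ (b ∔ (∸(a ⊚ b) ∔ a ⊚ b)) := by ac_rfl
      _ = a ∔ (b ∔ (∸a ∔ a)) ∔ (∸b ∔ b) := by rw [hx]; ac_rfl
      _ = (a ∔ ∸a ∔ a) ∔ (b ∔ ∸b ∔ b) := by rw [← hea]; ac_rfl
      _ = a ∔ b := by rw [add_reg, add_reg]
  calc a ∔ b = cdot a b ∔ a ⊚ b := hE_mul.symm
    _ = cdot a b ∔ (cdot a b ∔ (a ∔ b)) := by rw [hE_add]
    _ = a ⊚ b := by rw [← WeakBrace.add_assoc, hE, hE_add]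

end DualWeakBrace

end WeakBrace

open WeakBrace
theorem stmt15 {S : Type*} [DualWeakBrace S] :
    Soc S = {a : S | ∀ b : S, IsIdem (cdot a b) ∧ add a b = add b a} :=
  Set.ext fun _ =>
    ⟨fun ha b => ⟨isIdem_cdot_of_add_eq_mul (ha b).1, (ha b).2⟩,
      fun ha b => ⟨add_eq_mul_of_isIdem_cdot (fun x => (ha x).2) (ha b).1, (ha b).2⟩⟩
end
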